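/- arXiv:2312.16469 — 3 statements merged into one kernel-verified Lean document; each statement's English description precedes it below -/
import Mathlib

section
/- Define η(ξ) = (1-ξ)·((ξ-ξn)/(ξM-ξ))^{1/2} on the interval (ξn, 1), where ξn < 1 < ξM. Then η''(ξ) < 0 on (ξn, 1), i.e., η is strictly concave there. -/
/-- The upper half of the polytropic full Euler shock polar
`η(ξ) = (1-ξ) √((ξ-ξn)/(ξM-ξ))` has `η'' < 0` on `(ξn, 1)`,
i.e. `η` is strictly concave there, provided `ξn < 1 < ξM`. -/
theorem stmt6 (ξn ξM : ℝ) (h1 : ξn < 1) (h2 : 1 < ξM) (η : ℝ → ℝ)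
    (hη : ∀ ξ, η ξ = (1 - ξ) * Real.sqrt ((ξ - ξn) / (ξM - ξ))) :
    (∀ ξ ∈ Set.Ioo ξn 1, deriv (deriv η) ξ < 0) ∧
      StrictConcaveOn ℝ (Set.Ioo ξn 1) η := by
  have hηfun : η = fun ξ => (1 - ξ) * Real.sqrt ((ξ - ξn) / (ξM - ξ)) := funext hη
  -- first derivative on (ξn, 1)
  have hd1 : ∀ y ∈ Set.Ioo ξn 1, HasDerivAt η
      (-Real.sqrt ((y - ξn) / (ξM - y)) +
        (1 - y) * ((ξM - ξn) / (ξM - y) ^ 2 / (2 * Real.sqrt ((y - ξn) / (ξM - y))))) y := by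
    intro y hy
    have hu : 0 < y - ξn := sub_pos.2 hy.1
    have hv : 0 < ξM - y := by linarith [hy.2]
    have hq : 0 < (y - ξn) / (ξM - y) := div_pos hu hv
    have hqd : HasDerivAt (fun z => (z - ξn) / (ξM - z)) ((ξM - ξn) / (ξM - y) ^ 2) y := by
      have h := ((hasDerivAt_id' _).sub_const ξn).div
        ((hasDerivAt_const y ξM).sub (hasDerivAt_id' _)) hv.ne'
      refine h.congr_deriv ?_
      simp only [Pi.sub_apply]
      ring
    have hsq : HasDerivAt (fun z => Real.sqrt ((z - ξn) / (ξM - z)))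
        ((ξM - ξn) / (ξM - y) ^ 2 / (2 * Real.sqrt ((y - ξn) / (ξM - y)))) y :=
      hqd.sqrt hq.ne'
    have h := ((hasDerivAt_const y (1 : ℝ)).sub (hasDerivAt_id' _)).mul hsq
    rw [hηfun]
    refine h.congr_deriv ?_
    simp only [Pi.sub_apply]
    ring
  have hmain : ∀ ξ ∈ Set.Ioo ξn 1, deriv (deriv η) ξ < 0 := by
    intro x hx
    have hu : 0 < x - ξn := sub_pos.2 hx.1
    have hv : 0 < ξM - x := by linarith [hx.2]
    have hc : 0 < 1 - x := sub_pos.2 hx.2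
    have hq : 0 < (x - ξn) / (ξM - x) := div_pos hu hv
    set s := Real.sqrt ((x - ξn) / (ξM - x)) with hs_def
    have hspos : 0 < s := Real.sqrt_pos.2 hq
    have hs2 : s ^ 2 * (ξM - x) = x - ξn := by
      rw [hs_def, Real.sq_sqrt hq.le]
      field_simp
    have hqd : HasDerivAt (fun z => (z - ξn) / (ξM - z)) ((ξM - ξn) / (ξM - x) ^ 2) x := by
      have h := ((hasDerivAt_id' _).sub_const ξn).div
        ((hasDerivAt_const x ξM).sub (hasDerivAt_id' _)) hv.ne'
      refine h.congr_deriv ?_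
      simp only [Pi.sub_apply]
      ring
    have hsq : HasDerivAt (fun z => Real.sqrt ((z - ξn) / (ξM - z)))
        ((ξM - ξn) / (ξM - x) ^ 2 / (2 * s)) x := hqd.sqrt hq.ne'
    have h1 : HasDerivAt (fun y => -Real.sqrt ((y - ξn) / (ξM - y)))
        (-((ξM - ξn) / (ξM - x) ^ 2 / (2 * s))) x := hsq.neg
    have hpow : HasDerivAt (fun y => (ξM - y) ^ 2)
        ((2 : ℕ) * (ξM - x) ^ (2 - 1) * (0 - 1)) x :=
      ((hasDerivAt_const x ξM).sub (hasDerivAt_id' _)).pow 2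
    have hg1 : HasDerivAt (fun y => (ξM - ξn) / (ξM - y) ^ 2)
        (2 * (ξM - ξn) * (ξM - x) / ((ξM - x) ^ 2) ^ 2) x := by
      have h := (hasDerivAt_const x (ξM - ξn)).div hpow (pow_ne_zero 2 hv.ne')
      refine h.congr_deriv ?_
      push_cast
      ring
    have hg2 : HasDerivAt (fun y => 2 * Real.sqrt ((y - ξn) / (ξM - y)))
        (2 * ((ξM - ξn) / (ξM - x) ^ 2 / (2 * s))) x := hsq.const_mul 2
    have hg : HasDerivAt
        (fun y => (ξM - ξn) / (ξM - y) ^ 2 / (2 * Real.sqrt ((y - ξn) / (ξM - y))))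
        ((2 * (ξM - ξn) * (ξM - x) / ((ξM - x) ^ 2) ^ 2 * (2 * s) -
            (ξM - ξn) / (ξM - x) ^ 2 * (2 * ((ξM - ξn) / (ξM - x) ^ 2 / (2 * s)))) /
          (2 * s) ^ 2) x :=
      hg1.div hg2 (by positivity)
    have hB : HasDerivAt
        (fun y => (1 - y) * ((ξM - ξn) / (ξM - y) ^ 2 / (2 * Real.sqrt ((y - ξn) / (ξM - y)))))
        ((0 - 1) * ((ξM - ξn) / (ξM - x) ^ 2 / (2 * s)) +
          (1 - x) *
            ((2 * (ξM - ξn) * (ξM - x) / ((ξM - x) ^ 2) ^ 2 * (2 * s) -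
                (ξM - ξn) / (ξM - x) ^ 2 * (2 * ((ξM - ξn) / (ξM - x) ^ 2 / (2 * s)))) /
              (2 * s) ^ 2)) x :=
      ((hasDerivAt_const x (1 : ℝ)).sub (hasDerivAt_id' _)).mul hg
    have hH : HasDerivAt
        (fun y => -Real.sqrt ((y - ξn) / (ξM - y)) +
          (1 - y) * ((ξM - ξn) / (ξM - y) ^ 2 / (2 * Real.sqrt ((y - ξn) / (ξM - y)))))
        (-((ξM - ξn) / (ξM - x) ^ 2 / (2 * s)) +
          ((0 - 1) * ((ξM - ξn) / (ξM - x) ^ 2 / (2 * s)) +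
            (1 - x) *
              ((2 * (ξM - ξn) * (ξM - x) / ((ξM - x) ^ 2) ^ 2 * (2 * s) -
                  (ξM - ξn) / (ξM - x) ^ 2 * (2 * ((ξM - ξn) / (ξM - x) ^ 2 / (2 * s)))) /
                (2 * s) ^ 2))) x := h1.add hB
    have hev : deriv η =ᶠ[nhds x]
        (fun y => -Real.sqrt ((y - ξn) / (ξM - y)) +
          (1 - y) * ((ξM - ξn) / (ξM - y) ^ 2 / (2 * Real.sqrt ((y - ξn) / (ξM - y))))) :=
      Filter.eventuallyEq_of_mem (isOpen_Ioo.mem_nhds hx) (fun y hy => (hd1 y hy).deriv)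
    have hcalc : deriv (deriv η) x =
        ((x - ξn) + (ξM - x)) *
          (-(4 * (ξM - x) ^ 2 * s ^ 2) + 4 * (1 - x) * (ξM - x) * s ^ 2 -
            (1 - x) * ((x - ξn) + (ξM - x))) /
          (4 * (ξM - x) ^ 4 * s ^ 3) := by
      rw [hev.deriv_eq, hH.deriv]
      field_simp
      ring
    rw [hcalc]
    apply div_neg_of_neg_of_pos _ (by positivity)
    have hbr : -(4 * (ξM - x) ^ 2 * s ^ 2) + 4 * (1 - x) * (ξM - x) * s ^ 2 -
        (1 - x) * ((x - ξn) + (ξM - x)) =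
        -(4 * (x - ξn) * (ξM - x)) + (1 - x) * (3 * (x - ξn) - (ξM - x)) := by
      linear_combination (4 * ((1 - x) - (ξM - x))) * hs2
    rw [hbr]
    have hcv : 1 - x < ξM - x := by linarith
    have h3 : (1 - x) * (x - ξn) < (ξM - x) * (x - ξn) :=
      mul_lt_mul_of_pos_right hcv hu
    exact mul_neg_of_pos_of_neg (by linarith)
      (by nlinarith [mul_pos hu hv, mul_pos hc hv])
  refine ⟨hmain, strictConcaveOn_of_deriv2_neg (convex_Ioo _ _)
    (fun y hy => (hd1 y hy).continuousAt.continuousWithinAt) ?_⟩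
  intro x hx
  rw [interior_Ioo] at hx
  simpa [Function.iterate_succ, Function.comp] using hmain x hx
end

section
/- Suppose e = e(V, S) is a smooth equation of state on {V > 0} satisfying −e_V · V = R · e_S (the ideal gas law P V = R T with T = e_S, P = −e_V), and e_SS > 0. Then e is a function of temperature alone: there exists a function ẽ such that e(V,S) = ẽ(e_S(V,S)), i.e., any two states with equal temperature T = e_S have equal energy e. -/
/-- Joule's second law: if a smooth equation of state `e = e(V,S)` on
`{V > 0}` satisfies the ideal gas law `(−e_V)·V = R·e_S` (i.e. `P V = R T`
with `T = e_S`, `P = −e_V`) and `e_SS > 0`, then `e` is a function of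
temperature alone: there is `ẽ` with `e(V,S) = ẽ(e_S(V,S))`; equivalently,
any two states with equal temperature have equal energy. -/
theorem stmt9 (R : ℝ) (hR : 0 < R) (e : ℝ × ℝ → ℝ)
    (hsmooth : ContDiffOn ℝ (⊤ : ℕ∞) e {p : ℝ × ℝ | 0 < p.1})
    (hideal : ∀ p : ℝ × ℝ, 0 < p.1 →
      -(deriv (fun V => e (V, p.2)) p.1) * p.1 =
        R * deriv (fun S => e (p.1, S)) p.2)
    (heSS : ∀ p : ℝ × ℝ, 0 < p.1 →
      0 < deriv (fun S => deriv (fun S' => e (p.1, S')) S) p.2) :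
    (∃ f : ℝ → ℝ, ∀ p : ℝ × ℝ, 0 < p.1 →
        e p = f (deriv (fun S => e (p.1, S)) p.2)) ∧
      ∀ p q : ℝ × ℝ, 0 < p.1 → 0 < q.1 →
        deriv (fun S => e (p.1, S)) p.2 = deriv (fun S => e (q.1, S)) q.2 →
        e p = e q := by
  have hopen : IsOpen {p : ℝ × ℝ | 0 < p.1} := isOpen_lt continuous_const continuous_fst
  have hdiff : ∀ p : ℝ × ℝ, 0 < p.1 → HasFDerivAt e (fderiv ℝ e p) p := by
    intro p hp
    have := (hsmooth.differentiableOn (by simp)).differentiableAt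
      (hopen.mem_nhds (by exact hp))
    exact this.hasFDerivAt
  -- partial derivatives as fderiv applications
  have hV : ∀ p : ℝ × ℝ, 0 < p.1 →
      HasDerivAt (fun V => e (V, p.2)) (fderiv ℝ e p ((1:ℝ), (0:ℝ))) p.1 := by
    intro p hp
    have h1 : HasDerivAt (fun V : ℝ => (V, p.2)) ((1:ℝ), (0:ℝ)) p.1 :=
      (hasDerivAt_id p.1).prodMk (hasDerivAt_const _ _)
    have := (hdiff p hp).comp_hasDerivAt p.1 h1
    exact this
  have hS : ∀ p : ℝ × ℝ, 0 < p.1 →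
      HasDerivAt (fun S => e (p.1, S)) (fderiv ℝ e p ((0:ℝ), (1:ℝ))) p.2 := by
    intro p hp
    have h1 : HasDerivAt (fun S : ℝ => (p.1, S)) ((0:ℝ), (1:ℝ)) p.2 :=
      (hasDerivAt_const _ _).prodMk (hasDerivAt_id p.2)
    have := (hdiff p hp).comp_hasDerivAt p.2 h1
    exact this
  have hideal' : ∀ p : ℝ × ℝ, 0 < p.1 →
      -(fderiv ℝ e p ((1:ℝ), (0:ℝ))) * p.1 = R * fderiv ℝ e p ((0:ℝ), (1:ℝ)) := by
    intro p hp
    have := hideal p hp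
    rwa [(hV p hp).deriv, (hS p hp).deriv] at this
  -- e is constant along t ↦ (exp t, S0 + R t)
  have hcurve : ∀ S0 t : ℝ,
      HasDerivAt (fun t => e (Real.exp t, S0 + R * t)) 0 t := by
    intro S0 t
    have hγ : HasDerivAt (fun t : ℝ => (Real.exp t, S0 + R * t)) (Real.exp t, R) t := by
      have h2 : HasDerivAt (fun t : ℝ => S0 + R * t) R t := by
        simpa using ((hasDerivAt_id t).const_mul R).const_add S0
      exact (Real.hasDerivAt_exp t).prodMk h2
    have hp : (0:ℝ) < (Real.exp t, S0 + R * t).1 := Real.exp_pos t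
    have h := (hdiff _ hp).comp_hasDerivAt t hγ
    have hlin : fderiv ℝ e (Real.exp t, S0 + R * t) (Real.exp t, R)
        = Real.exp t * fderiv ℝ e (Real.exp t, S0 + R * t) ((1:ℝ), (0:ℝ))
          + R * fderiv ℝ e (Real.exp t, S0 + R * t) ((0:ℝ), (1:ℝ)) := by
      have : (Real.exp t, R) = Real.exp t • ((1:ℝ), (0:ℝ)) + R • ((0:ℝ), (1:ℝ)) := by
        simp [Prod.ext_iff]
      rw [this, map_add, map_smul, map_smul]; simp
    have hid := hideal' _ hp
    have hzero : fderiv ℝ e (Real.exp t, S0 + R * t) (Real.exp t, R) = 0 := by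
      rw [hlin]; simp only at hid ⊢; nlinarith [Real.exp_pos t]
    rw [hzero] at h
    exact h
  have key : ∀ V S : ℝ, 0 < V → e (V, S) = e (1, S - R * Real.log V) := by
    intro V S hV0
    have hdiffc : Differentiable ℝ (fun t => e (Real.exp t, (S - R * Real.log V) + R * t)) :=
      fun t => (hcurve _ t).differentiableAt
    have hc := is_const_of_deriv_eq_zero hdiffc (fun t => (hcurve _ t).deriv) (Real.log V) 0
    simpa [Real.exp_log hV0] using hc
  set E1 : ℝ → ℝ := fun s => e (1, s) with hE1def
  set g : ℝ → ℝ := deriv E1 with hgdef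
  have keyS : ∀ V S : ℝ, 0 < V →
      deriv (fun S => e (V, S)) S = g (S - R * Real.log V) := by
    intro V S hV0
    have : (fun S => e (V, S)) = fun S => E1 (S - R * Real.log V) := by
      funext S'; exact key V S' hV0
    rw [this, deriv_comp_sub_const]
  have hgmono : StrictMono g := by
    apply strictMono_of_deriv_pos
    intro s
    have := heSS (1, s) (by norm_num)
    simpa [hE1def, hgdef] using this
  have hginj : Function.Injective g := hgmono.injective
  constructor
  · refine ⟨fun t => E1 (Function.invFun g t), fun p hp => ?_⟩
    rw [keyS p.1 p.2 hp]
    show e p = E1 (Function.invFun g (g (p.2 - R * Real.log p.1)))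
    rw [Function.leftInverse_invFun hginj]
    have := key p.1 p.2 hp
    simpa using this
  · intro p q hp hq hT
    rw [keyS p.1 p.2 hp, keyS q.1 q.2 hq] at hT
    have := hginj hT
    have e1 := key p.1 p.2 hp
    have e2 := key q.1 q.2 hq
    rw [this] at e1
    simp only [Prod.mk.eta] at e1 e2
    rw [e1, e2]
end

section
/- The function e(T) with de/dT = R·((1 − 4CRT)^{-1/2} − 1)/2 (for 0 < 4CRT < 1, C < 0 or appropriate sign so that e_T > 0) satisfies the borderline convexity equation e_TT = e_T(e_T + R)(2e_T + R)/(R² T). -/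
/-- The function `e(T)` with `e_T = R((1 − 4CRT)^{-1/2} − 1)/2`
(on the interval where `0 < 4CRT < 1`, so that `e_T > 0`) satisfies the
borderline convexity equation `e_TT = e_T(e_T + R)(2e_T + R)/(R² T)`. -/
theorem stmt13 (R C : ℝ) (hR : 0 < R) (e : ℝ → ℝ)
    (he : ∀ T : ℝ, 0 < 4 * C * R * T → 4 * C * R * T < 1 →
      deriv e T = R * ((1 - 4 * C * R * T) ^ (-(1 : ℝ) / 2) - 1) / 2)
    (T : ℝ) (hT1 : 0 < 4 * C * R * T) (hT2 : 4 * C * R * T < 1) :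
    deriv (deriv e) T =
      deriv e T * (deriv e T + R) * (2 * deriv e T + R) / (R ^ 2 * T) := by
  set a := 4 * C * R with ha
  have hb : (0:ℝ) < 1 - a * T := by
    have : a * T = 4 * C * R * T := by ring
    linarith [this]
  have haT' : (0:ℝ) < a * T := hT1
  have hT0 : T ≠ 0 := by
    intro h; rw [h, mul_zero] at haT'; exact lt_irrefl 0 haT'
  have hopen : IsOpen {x : ℝ | 0 < a * x ∧ a * x < 1} := by
    have : {x : ℝ | 0 < a * x ∧ a * x < 1} = (fun x => a * x) ⁻¹' (Set.Ioo 0 1) := by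
      ext x; simp [Set.mem_Ioo]
    rw [this]
    exact (isOpen_Ioo).preimage (continuous_const.mul continuous_id)
  have hmem : T ∈ {x : ℝ | 0 < a * x ∧ a * x < 1} := by
    constructor
    · exact haT'
    · calc a * T = 4 * C * R * T := by ring
      _ < 1 := hT2
  -- eventual equality of deriv e with the closed form
  have hev : deriv e =ᶠ[nhds T] fun x => R * ((1 - a * x) ^ (-(1:ℝ) / 2) - 1) / 2 := by
    filter_upwards [hopen.mem_nhds hmem] with x hx
    have h1 : 0 < 4 * C * R * x := by
      calc (0:ℝ) < a * x := hx.1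
      _ = 4 * C * R * x := by ring
    have h2 : 4 * C * R * x < 1 := by
      calc 4 * C * R * x = a * x := by ring
      _ < 1 := hx.2
    have := he x h1 h2
    simpa [ha] using this
  -- derivative of the closed form
  have hd : HasDerivAt (fun x : ℝ => R * ((1 - a * x) ^ (-(1:ℝ) / 2) - 1) / 2)
      (R * (-(1:ℝ)/2 * (1 - a * T) ^ (-(1:ℝ)/2 - 1) * (-a)) / 2) T := by
    have hlin : HasDerivAt (fun x : ℝ => 1 - a * x) (-a) T := by
      simpa using ((hasDerivAt_id T).const_mul a).const_sub (1:ℝ)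
    have hpow : HasDerivAt (fun x : ℝ => (1 - a * x) ^ (-(1:ℝ)/2))
        (-(1:ℝ)/2 * (1 - a * T) ^ (-(1:ℝ)/2 - 1) * (-a)) T := by
      have := hlin.rpow_const (p := -(1:ℝ)/2) (Or.inl (ne_of_gt hb))
      convert this using 1
      ring
    simpa [mul_comm, mul_assoc] using ((hpow.sub_const 1).const_mul R).div_const 2
  have hderiv2 : deriv (deriv e) T
      = R * (-(1:ℝ)/2 * (1 - a * T) ^ (-(1:ℝ)/2 - 1) * (-a)) / 2 := by
    rw [hev.deriv_eq]; exact hd.deriv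
  have heT : deriv e T = R * ((1 - a * T) ^ (-(1:ℝ) / 2) - 1) / 2 := by
    simpa [ha] using he T hT1 hT2
  set v : ℝ := (1 - a * T) ^ (-(1:ℝ)/2) with hv
  have hv2 : v * v = (1 - a * T)⁻¹ := by
    rw [hv, ← Real.rpow_add hb]
    norm_num
    exact Real.rpow_neg_one _
  have hv3 : (1 - a * T) ^ (-(1:ℝ)/2 - 1) = v * v * v := by
    rw [hv, ← Real.rpow_add hb, ← Real.rpow_add hb]
    norm_num
  rw [hderiv2, heT, hv3]
  have hbne : (1 - a * T) ≠ 0 := ne_of_gt hb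
  have hRne : R ≠ 0 := ne_of_gt hR
  have key : v * v * (1 - a * T) = 1 := by
    rw [hv2]; field_simp
  field_simp
  rw [ha] at key
  linear_combination (-v) * key
end
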